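/- arXiv:2112.01595 — 4 statements merged into one kernel-verified Lean document; each statement's English description precedes it below -/
import Mathlib

section
/- Let V be a finite-dimensional real inner product space and let A : V → V be an invertible linear map with |det A| = 1. Suppose L ⊆ V is a one-dimensional subspace such that A maps L into L and maps the orthogonal complement L^⊥ into L^⊥, that dim L^⊥ ≥ 2, and that ‖A u‖ > ‖u‖ for every nonzero u ∈ L^⊥. Then for every nonzero l ∈ L and every nonzero u ∈ L^⊥ one has ‖A l‖ · ‖A u‖ < ‖l‖ · ‖u‖; in particular, for unit vectors l ∈ L and u ∈ L^⊥, ‖A l‖ · ‖A u‖ < 1. -/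
open Module Finset
open scoped RealInnerProductSpace

lemma hadamard_det {E : Type*} [NormedAddCommGroup E] [InnerProductSpace ℝ E]
    [FiniteDimensional ℝ E] {n : ℕ} (hn : finrank ℝ E = n)
    (b : OrthonormalBasis (Fin n) ℝ E) (C : E →ₗ[ℝ] E) :
    |LinearMap.det C| ≤ ∏ i, ‖C (b i)‖ := by
  have hcard : finrank ℝ E = Fintype.card (Fin n) := by simp [hn]
  haveI i1 : WellFoundedLT (Fin n) := inferInstance
  haveI i2 : LocallyFiniteOrderBot (Fin n) := inferInstance
  set f : Fin n → E := fun i => C (b i) with hf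
  set g : OrthonormalBasis (Fin n) ℝ E :=
    @InnerProductSpace.gramSchmidtOrthonormalBasis ℝ E _ _ _ (Fin n) _ i2 i1 _ _ hcard f with hg
  have h1 : b.toBasis.det f = LinearMap.det C := by
    have : f = C ∘ ⇑b.toBasis := by ext i; simp [hf]
    rw [this, Basis.det_comp, Basis.det_self, mul_one]
  have h2 : b.toBasis.det f = b.toBasis.det ⇑g.toBasis * g.toBasis.det f := by
    conv_lhs => rw [b.toBasis.det.eq_smul_basis_det g.toBasis]
    simp
  have h3 : |b.toBasis.det ⇑g.toBasis| = 1 := by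
    rcases b.det_to_matrix_orthonormalBasis_real g with h | h <;>
      · rw [show ⇑g.toBasis = ⇑g from g.coe_toBasis]; rw [h] <;> simp
  have h4 : g.toBasis.det f = ∏ i, ⟪g i, f i⟫ :=
    @InnerProductSpace.gramSchmidtOrthonormalBasis_det ℝ E _ _ _ (Fin n) _ i2 i1 _ _ hcard f _
  calc |LinearMap.det C| = |b.toBasis.det ⇑g.toBasis| * |g.toBasis.det f| := by
        rw [← h1, h2, abs_mul]
    _ = |∏ i, ⟪g i, f i⟫| := by rw [h3, one_mul, h4]
    _ ≤ ∏ i, ‖C (b i)‖ := by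
        rw [Finset.abs_prod]
        refine Finset.prod_le_prod (fun i _ => abs_nonneg _) (fun i _ => ?_)
        calc |⟪g i, f i⟫| ≤ ‖g i‖ * ‖f i‖ := abs_real_inner_le_norm _ _
          _ = ‖C (b i)‖ := by rw [g.orthonormal.1 i, one_mul]

/-- Section 2.1: for a volume preserving linear map with a one-dimensional
invariant subspace `L` whose orthogonal complement (of dimension ≥ 2) is
invariant and uniformly expanded, the product of the norms of the images of a
vector in `L` and a vector in `L^⊥` strictly contracts. -/
theorem stmt_0
    {V : Type*} [NormedAddCommGroup V] [InnerProductSpace ℝ V]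
    [FiniteDimensional ℝ V]
    (A : V →ₗ[ℝ] V) (hAinv : Function.Bijective A)
    (hdet : |LinearMap.det A| = 1)
    (L : Submodule ℝ V) (hL : Module.finrank ℝ L = 1)
    (hAL : ∀ v ∈ L, A v ∈ L)
    (hALperp : ∀ v ∈ Lᗮ, A v ∈ Lᗮ)
    (hdim : 2 ≤ Module.finrank ℝ Lᗮ)
    (hexp : ∀ u ∈ Lᗮ, u ≠ 0 → ‖u‖ < ‖A u‖) :
    (∀ l ∈ L, l ≠ 0 → ∀ u ∈ Lᗮ, u ≠ 0 → ‖A l‖ * ‖A u‖ < ‖l‖ * ‖u‖) ∧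
    (∀ l ∈ L, ‖l‖ = 1 → ∀ u ∈ Lᗮ, ‖u‖ = 1 → ‖A l‖ * ‖A u‖ < 1) := by
  classical
  set E := LinearEquiv.ofBijective A hAinv with hE
  set C : V →ₗ[ℝ] V := (E.symm : V →ₗ[ℝ] V) with hC
  have hEA : ∀ v, E v = A v := fun v => rfl
  have hCA : ∀ v, C (A v) = v := fun v => E.symm_apply_apply v
  have hAC : ∀ v, A (C v) = v := fun v => E.apply_symm_apply v
  have hCinj : Function.Injective C := E.symm.injective
  -- determinant of the inverse
  have hdetC : |LinearMap.det C| = 1 := by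
    have h := LinearEquiv.det_mul_det_symm E
    have h2 : LinearMap.det (E : V →ₗ[ℝ] V) = LinearMap.det A := rfl
    have := congrArg abs h
    rw [abs_mul, h2, hdet, one_mul, abs_one] at this
    exact this
  -- the inverse preserves L and Lᗮ
  have hinv_sub : ∀ (p : Submodule ℝ V) (hp : ∀ v ∈ p, A v ∈ p), ∀ x ∈ p, C x ∈ p := by
    intro p hp x hx
    have hinj : Function.Injective (A.restrict hp) := by
      intro a b hab
      have : A a = A b := congrArg Subtype.val hab
      exact Subtype.ext (hAinv.1 this)
    have hsurj : Function.Surjective (A.restrict hp) :=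
      (LinearMap.injective_iff_surjective).1 hinj
    obtain ⟨y, hy⟩ := hsurj ⟨x, hx⟩
    have hAy : A y = x := congrArg Subtype.val hy
    have : C x = y := by rw [← hAy, hCA]
    rw [this]; exact y.2
  have hCL : ∀ x ∈ L, C x ∈ L := hinv_sub L hAL
  have hCperp : ∀ x ∈ Lᗮ, C x ∈ Lᗮ := hinv_sub Lᗮ hALperp
  -- contraction on Lᗮ
  have hcontr : ∀ x ∈ Lᗮ, x ≠ 0 → ‖C x‖ < ‖x‖ := by
    intro x hx hx0
    have hy : A (C x) = x := hAC x
    have hy0 : C x ≠ 0 := fun h => hx0 (by rw [← hy, h, map_zero])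
    have := hexp (C x) (hCperp x hx) hy0
    rwa [hy] at this
  have main : ∀ l ∈ L, l ≠ 0 → ∀ u ∈ Lᗮ, u ≠ 0 → ‖A l‖ * ‖A u‖ < ‖l‖ * ‖u‖ := by
    intro l hl hl0 u hu hu0
    have hAl0 : A l ≠ 0 := fun h => hl0 (hAinv.1 (h.trans (map_zero A).symm))
    have hAu0 : A u ≠ 0 := fun h => hu0 (hAinv.1 (h.trans (map_zero A).symm))
    have ha : (0:ℝ) < ‖A l‖ := norm_pos_iff.2 hAl0
    have hc : (0:ℝ) < ‖A u‖ := norm_pos_iff.2 hAu0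
    set e₀ : V := ‖A l‖⁻¹ • A l with he₀
    set e₁ : V := ‖A u‖⁻¹ • A u with he₁
    have he₀L : e₀ ∈ L := L.smul_mem _ (hAL l hl)
    have he₁P : e₁ ∈ Lᗮ := Lᗮ.smul_mem _ (hALperp u hu)
    have he₀n : ‖e₀‖ = 1 := by
      rw [he₀, norm_smul, norm_inv, norm_norm, inv_mul_cancel₀ ha.ne']
    have he₁n : ‖e₁‖ = 1 := by
      rw [he₁, norm_smul, norm_inv, norm_norm, inv_mul_cancel₀ hc.ne']
    set m := finrank ℝ Lᗮ with hm
    -- orthonormal basis of Lᗮ whose 0th vector is e₁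
    have hm0 : 0 < m := by omega
    haveI : NeZero m := ⟨by omega⟩
    have hcardP : finrank ℝ Lᗮ = Fintype.card (Fin m) := by simp [hm]
    set v : Fin m → Lᗮ := fun _ => ⟨e₁, he₁P⟩ with hv
    have hov : Orthonormal ℝ (({0} : Set (Fin m)).restrict v) := by
      constructor
      · intro i
        show ‖(⟨e₁, he₁P⟩ : Lᗮ)‖ = 1
        simpa using he₁n
      · intro i j hij
        exact absurd (Subtype.ext ((Set.mem_singleton_iff.1 i.2).trans
          (Set.mem_singleton_iff.1 j.2).symm)) hij
    obtain ⟨bp, hbp⟩ := hov.exists_orthonormalBasis_extension_of_card_eq hcardP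
    have hbp0 : (bp 0 : V) = e₁ := by
      have := hbp 0 rfl
      rw [this]
    -- combined orthonormal family on V
    set F : Fin (m+1) → V := Fin.cons e₀ (fun i => (bp i : V)) with hF
    have hFsucc : ∀ i : Fin m, F i.succ = (bp i : V) := fun i => by
      simp [hF]
    have hF0 : F 0 = e₀ := by simp [hF]
    have hFperp : ∀ i : Fin m, F i.succ ∈ Lᗮ := fun i => by
      rw [hFsucc]; exact (bp i).2
    have hFn : ∀ i, ‖F i‖ = 1 := by
      intro i
      refine Fin.cases ?_ ?_ i
      · rw [hF0]; exact he₀n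
      · intro j
        rw [hFsucc, Submodule.norm_coe]
        exact bp.orthonormal.1 j
    have hFinner : ∀ i j : Fin (m+1), i ≠ j → ⟪F i, F j⟫ = 0 := by
      have cross : ∀ k : Fin m, ⟪F 0, F k.succ⟫ = 0 := fun k =>
        (Submodule.mem_orthogonal L _).1 (hFperp k) (F 0) (hF0 ▸ he₀L)
      intro i j
      induction i using Fin.cases with
      | zero =>
        induction j using Fin.cases with
        | zero => intro h; exact absurd rfl h
        | succ k => intro _; exact cross k
      | succ k =>
        induction j using Fin.cases with
        | zero => intro _; rw [real_inner_comm]; exact cross k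
        | succ k' =>
          intro h
          have hkk' : k ≠ k' := fun hh => h (by rw [hh])
          have h0 : (⟪bp k, bp k'⟫ : ℝ) = 0 := bp.orthonormal.2 hkk'
          rw [Submodule.coe_inner] at h0
          rw [hFsucc, hFsucc]
          exact h0
    have hFo : Orthonormal ℝ F := ⟨hFn, fun {i j} h => hFinner i j h⟩
    have hcardV : finrank ℝ V = m + 1 := by
      have h := Submodule.finrank_add_finrank_orthogonal (K := L)
      omega
    have hcardF : finrank ℝ V = Fintype.card (Fin (m+1)) := by simp [hcardV]
    have hFo' : Orthonormal ℝ ((Set.univ : Set (Fin (m+1))).restrict F) :=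
      hFo.comp _ Subtype.val_injective
    obtain ⟨b, hbF⟩ := hFo'.exists_orthonormalBasis_extension_of_card_eq hcardF
    have hbF' : ∀ i, b i = F i := fun i => hbF i (Set.mem_univ i)
    have hone : (1:ℝ) ≤ ∏ i, ‖C (b i)‖ :=
      hdetC.symm.le.trans (hadamard_det hcardV b C)
    have hbpnz : ∀ i : Fin m, (bp i : V) ≠ 0 := by
      intro i h
      have h1 : ‖bp i‖ = 1 := bp.orthonormal.1 i
      rw [← Submodule.norm_coe, h] at h1
      simp at h1
    have hpos : ∀ i : Fin m, 0 < ‖C (bp i : V)‖ := by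
      intro i
      refine norm_pos_iff.2 fun h => hbpnz i ?_
      exact hCinj (h.trans (map_zero C).symm)
    have hlt1 : ∀ i : Fin m, ‖C (bp i : V)‖ < 1 := by
      intro i
      have h := hcontr _ (bp i).2 (hbpnz i)
      rwa [Submodule.norm_coe, bp.orthonormal.1 i] at h
    have hprod : ∏ i, ‖C (b i)‖ =
        ‖C e₀‖ * (‖C e₁‖ * ∏ i ∈ univ.erase (0 : Fin m), ‖C (bp i : V)‖) := by
      calc ∏ i, ‖C (b i)‖ = ∏ i, ‖C (F i)‖ := by
            exact Finset.prod_congr rfl fun i _ => by rw [hbF']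
        _ = ‖C (F 0)‖ * ∏ i : Fin m, ‖C (F i.succ)‖ := Fin.prod_univ_succ _
        _ = ‖C e₀‖ * ∏ i : Fin m, ‖C (bp i : V)‖ := by
            simp only [hF0, hFsucc]
        _ = ‖C e₀‖ * (‖C (bp 0 : V)‖ * ∏ i ∈ univ.erase (0 : Fin m), ‖C (bp i : V)‖) := by
            congr 1
            exact (Finset.mul_prod_erase univ
              (fun i : Fin m => ‖C ((bp i : V))‖) (Finset.mem_univ (0 : Fin m))).symm
        _ = _ := by rw [hbp0]
    have herase : ∏ i ∈ univ.erase (0 : Fin m), ‖C (bp i : V)‖ < 1 := by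
      have hne : (univ.erase (0 : Fin m)).Nonempty := by
        refine ⟨⟨1, by omega⟩, Finset.mem_erase.2 ⟨?_, Finset.mem_univ _⟩⟩
        intro h
        have := congrArg Fin.val h
        simp at this
      calc ∏ i ∈ univ.erase (0 : Fin m), ‖C (bp i : V)‖
          < ∏ _i ∈ univ.erase (0 : Fin m), (1:ℝ) :=
            Finset.prod_lt_prod_of_nonempty (fun i _ => hpos i) (fun i _ => hlt1 i) hne
        _ = 1 := Finset.prod_const_one
    have heraspos : 0 < ∏ i ∈ univ.erase (0 : Fin m), ‖C (bp i : V)‖ :=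
      Finset.prod_pos fun i _ => hpos i
    have hCe0 : ‖C e₀‖ = ‖A l‖⁻¹ * ‖l‖ := by
      rw [he₀, map_smul, norm_smul, norm_inv, norm_norm, hCA]
    have hCe1 : ‖C e₁‖ = ‖A u‖⁻¹ * ‖u‖ := by
      rw [he₁, map_smul, norm_smul, norm_inv, norm_norm, hCA]
    have hx0 : 0 < ‖C e₀‖ := by
      rw [hCe0]; exact mul_pos (inv_pos.2 ha) (norm_pos_iff.2 hl0)
    have hx1 : 0 < ‖C e₁‖ := by
      rw [hCe1]; exact mul_pos (inv_pos.2 hc) (norm_pos_iff.2 hu0)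
    have key : 1 < ‖C e₀‖ * ‖C e₁‖ := by
      rw [hprod] at hone
      nlinarith [mul_pos hx0 hx1]
    rw [hCe0, hCe1] at key
    have hfin := mul_lt_mul_of_pos_left key (mul_pos ha hc)
    rw [mul_one] at hfin
    have heq : ‖A l‖ * ‖A u‖ * (‖A l‖⁻¹ * ‖l‖ * (‖A u‖⁻¹ * ‖u‖)) = ‖l‖ * ‖u‖ := by
      field_simp
    rw [heq] at hfin
    exact hfin
  refine ⟨main, ?_⟩
  intro l hl hln u hu hun
  have := main l hl (by intro h; rw [h] at hln; simp at hln) u hu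
    (by intro h; rw [h] at hun; simp at hun)
  rwa [hln, hun, one_mul] at this
end

section
/- Let V be a finite-dimensional real inner product space and let A : V → V be an invertible linear map with |det A| = 1. Suppose L ⊆ V is a one-dimensional subspace such that A maps L into L and maps the orthogonal complement L^⊥ into L^⊥, that dim L^⊥ ≥ 2, and that ‖A u‖ > ‖u‖ for every nonzero u ∈ L^⊥. Then for all unit vectors l ∈ L and u₁, u₂ ∈ L^⊥ one has ‖A l‖ · ‖A⁻¹ u₁‖ · ‖A u₂‖ < 1. -/
open Module Finset

lemma aux_det_prodMap {M₁ M₂ : Type*} [AddCommGroup M₁] [Module ℝ M₁]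
    [AddCommGroup M₂] [Module ℝ M₂] {n m : ℕ}
    (b₁ : Basis (Fin n) ℝ M₁) (b₂ : Basis (Fin m) ℝ M₂)
    (f : M₁ →ₗ[ℝ] M₁) (g : M₂ →ₗ[ℝ] M₂) :
    LinearMap.det (f.prodMap g) = LinearMap.det f * LinearMap.det g := by
  rw [← LinearMap.det_toMatrix (b₁.prod b₂), LinearMap.toMatrix_prodMap b₁ b₂,
    Matrix.det_fromBlocks_zero₁₂, LinearMap.det_toMatrix, LinearMap.det_toMatrix]


lemma aux_expand {E : Type*} [NormedAddCommGroup E] [InnerProductSpace ℝ E]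
    [FiniteDimensional ℝ E] (hdim : 2 ≤ Module.finrank ℝ E)
    (g : E →ₗ[ℝ] E) (hexp : ∀ x : E, x ≠ 0 → ‖x‖ < ‖g x‖)
    (w u₂ : E) (hw : ‖g w‖ = 1) (hu₂ : ‖u₂‖ = 1) :
    ‖w‖ * ‖g u₂‖ < |LinearMap.det g| := by
  classical
  set n := Module.finrank ℝ E with hn
  haveI : Nonempty (Fin n) := ⟨⟨0, by omega⟩⟩
  set T : E →ₗ[ℝ] E := LinearMap.adjoint g * g with hTdef
  have hT : T.IsSymmetric := LinearMap.isSymmetric_adjoint_mul_self g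
  have hrank : Module.finrank ℝ E = n := rfl
  set μ := hT.eigenvalues hrank with hμdef
  set b := hT.eigenvectorBasis hrank with hbdef
  -- inner of T
  have hTinner : ∀ x : E, (inner ℝ (T x) x : ℝ) = ‖g x‖ ^ 2 := by
    intro x
    have : T x = LinearMap.adjoint g (g x) := rfl
    rw [this, LinearMap.adjoint_inner_left, real_inner_self_eq_norm_sq]
  -- eigenvalues > 1
  have hμ1 : ∀ i, 1 < μ i := by
    intro i
    have hb1 : ‖b i‖ = 1 := b.orthonormal.1 i
    have hbne : b i ≠ 0 := by
      intro h; rw [h, norm_zero] at hb1; norm_num at hb1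
    have h1 : (inner ℝ (T (b i)) (b i) : ℝ) = μ i := by
      rw [hT.apply_eigenvectorBasis hrank i, real_inner_smul_left,
        real_inner_self_eq_norm_sq, hb1]
      norm_num
      rfl
    have h2 := hTinner (b i)
    have h3 := hexp (b i) hbne
    nlinarith [norm_nonneg (g (b i))]
  -- norms via coordinates
  have hnorm2 : ∀ x : E, ‖x‖ ^ 2 = ∑ i, (b.repr x i) ^ 2 := by
    intro x
    have := b.repr.norm_map x
    rw [← this, EuclideanSpace.norm_eq]
    rw [Real.sq_sqrt (by positivity)]
    congr 1; ext i; rw [Real.norm_eq_abs, sq_abs]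
  have hgnorm2 : ∀ x : E, ‖g x‖ ^ 2 = ∑ i, μ i * (b.repr x i) ^ 2 := by
    intro x
    rw [← hTinner x, ← b.repr.inner_map_map (T x) x]
    rw [PiLp.inner_apply]
    congr 1; ext i
    rw [hT.eigenvectorBasis_apply_self_apply hrank x i]
    simp [RCLike.inner_apply]
    ring
  -- min and max eigenvalue indices
  obtain ⟨jmin, -, hjmin⟩ := Finset.exists_min_image Finset.univ μ ⟨Classical.arbitrary _, mem_univ _⟩
  obtain ⟨jmax, -, hjmax⟩ := Finset.exists_max_image Finset.univ μ ⟨Classical.arbitrary _, mem_univ _⟩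
  have hjmin' : ∀ i, μ jmin ≤ μ i := fun i => hjmin i (mem_univ i)
  have hjmax' : ∀ i, μ i ≤ μ jmax := fun i => hjmax i (mem_univ i)
  -- bound for w
  have hwbound : μ jmin * ‖w‖ ^ 2 ≤ 1 := by
    have h1 : μ jmin * ‖w‖ ^ 2 ≤ ‖g w‖ ^ 2 := by
      rw [hgnorm2, hnorm2, Finset.mul_sum]
      apply Finset.sum_le_sum
      intro i _
      have := hjmin' i
      nlinarith [sq_nonneg (b.repr w i)]
    rw [hw] at h1; linarith [h1]
  have hu2bound : ‖g u₂‖ ^ 2 ≤ μ jmax := by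
    have h1 : ‖g u₂‖ ^ 2 ≤ μ jmax * ‖u₂‖ ^ 2 := by
      rw [hgnorm2, hnorm2, Finset.mul_sum]
      apply Finset.sum_le_sum
      intro i _
      nlinarith [sq_nonneg (b.repr u₂ i), hjmax' i]
    rw [hu₂] at h1; linarith
  -- determinant
  have hdetT : LinearMap.det T = ∏ i, μ i := by
    rw [← LinearMap.det_toMatrix b.toBasis]
    have hdiag : LinearMap.toMatrix b.toBasis b.toBasis T = Matrix.diagonal μ := by
      ext i j
      rw [LinearMap.toMatrix_apply, OrthonormalBasis.coe_toBasis,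
        hT.apply_eigenvectorBasis hrank j, map_smul, Finsupp.smul_apply,
        OrthonormalBasis.coe_toBasis_repr_apply, OrthonormalBasis.repr_self]
      by_cases h : i = j
      · subst h
        simp [EuclideanSpace.single_apply]
        rfl
      · rw [Matrix.diagonal_apply_ne _ h]
        simp [EuclideanSpace.single_apply, h]
    rw [hdiag, Matrix.det_diagonal]
  have hdetg2 : |LinearMap.det g| ^ 2 = ∏ i, μ i := by
    have hadj : LinearMap.det (LinearMap.adjoint g) = LinearMap.det g := by
      let ob := stdOrthonormalBasis ℝ E
      rw [← LinearMap.det_toMatrix ob.toBasis, LinearMap.toMatrix_adjoint,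
        Matrix.det_conjTranspose, star_trivial, LinearMap.det_toMatrix]
    have : LinearMap.det T = LinearMap.det g * LinearMap.det g := by
      rw [hTdef, Module.End.mul_eq_comp, LinearMap.det_comp, hadj]
    rw [sq_abs, sq, ← this, hdetT]
  -- product lower bound
  have hprod : μ jmax * μ jmin ≤ ∏ i, μ i := by
    rw [← Finset.mul_prod_erase Finset.univ μ (mem_univ jmax)]
    apply mul_le_mul_of_nonneg_left _ (by linarith [hμ1 jmax])
    have hcard : (Finset.univ.erase jmax).Nonempty := by
      rw [← Finset.card_pos, Finset.card_erase_of_mem (mem_univ jmax), Finset.card_univ,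
        Fintype.card_fin]
      omega
    obtain ⟨k, hk⟩ := hcard
    have hstep : μ k ≤ ∏ i ∈ Finset.univ.erase jmax, μ i := by
      have h0 : ∀ i ∈ Finset.univ.erase jmax, (0:ℝ) ≤ if i = k then μ k else 1 := by
        intro i _
        split
        · linarith [hμ1 k]
        · norm_num
      have h1 : ∀ i ∈ Finset.univ.erase jmax, (if i = k then μ k else 1) ≤ μ i := by
        intro i _
        split
        · next h => rw [h]
        · linarith [hμ1 i]
      have h2 := Finset.prod_le_prod h0 h1
      have h3 : (∏ i ∈ Finset.univ.erase jmax, if i = k then μ k else 1) = μ k := by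
        rw [Finset.prod_eq_single k (fun b _ hb => if_neg hb) (fun h => absurd hk h), if_pos rfl]
      rwa [h3] at h2
    calc μ jmin ≤ μ k := hjmin' k
      _ ≤ ∏ i ∈ Finset.univ.erase jmax, μ i := hstep
  -- conclude
  have hdetpos : (0:ℝ) < |LinearMap.det g| := by
    have : (0:ℝ) < ∏ i, μ i := Finset.prod_pos (fun i _ => by linarith [hμ1 i])
    by_contra h
    push_neg at h
    have : |LinearMap.det g| = 0 := le_antisymm h (abs_nonneg _)
    rw [this] at hdetg2; nlinarith
  apply lt_of_pow_lt_pow_left₀ 2 (le_of_lt hdetpos)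
  rw [mul_pow, hdetg2]
  have h1 := hμ1 jmin
  have h2 := hμ1 jmax
  nlinarith [norm_nonneg w, norm_nonneg (g u₂), sq_nonneg (‖g u₂‖)]


/-- Section 2.1: the `C¹` regularity criterion for the weak stable distribution
holds for codimension one volume preserving maps: for unit vectors `l ∈ L`,
`u₁, u₂ ∈ L^⊥` one has `‖A l‖ · ‖A⁻¹ u₁‖ · ‖A u₂‖ < 1`. -/
theorem stmt_2
    {V : Type*} [NormedAddCommGroup V] [InnerProductSpace ℝ V]
    [FiniteDimensional ℝ V]
    (A : V ≃ₗ[ℝ] V)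
    (hdet : |LinearMap.det (A : V →ₗ[ℝ] V)| = 1)
    (L : Submodule ℝ V) (hL : Module.finrank ℝ L = 1)
    (hAL : ∀ v ∈ L, A v ∈ L)
    (hALperp : ∀ v ∈ Lᗮ, A v ∈ Lᗮ)
    (hdim : 2 ≤ Module.finrank ℝ Lᗮ)
    (hexp : ∀ u ∈ Lᗮ, u ≠ 0 → ‖u‖ < ‖A u‖) :
    ∀ l ∈ L, ‖l‖ = 1 → ∀ u₁ ∈ Lᗮ, ‖u₁‖ = 1 → ∀ u₂ ∈ Lᗮ, ‖u₂‖ = 1 →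
      ‖A l‖ * ‖A.symm u₁‖ * ‖A u₂‖ < 1 := by
  intro l hl hln u₁ hu₁ hu₁n u₂ hu₂ hu₂n
  have hcompl : IsCompl L Lᗮ := Submodule.isCompl_orthogonal_of_hasOrthogonalProjection
  set f : L →ₗ[ℝ] L := (A : V →ₗ[ℝ] V).restrict hAL with hfdef
  set g : Lᗮ →ₗ[ℝ] Lᗮ := (A : V →ₗ[ℝ] V).restrict hALperp with hgdef
  set e := Submodule.prodEquivOfIsCompl L Lᗮ hcompl with hedef
  -- determinant factorization
  have hcomp : (A : V →ₗ[ℝ] V) =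
      (e : L × Lᗮ →ₗ[ℝ] V) ∘ₗ (f.prodMap g) ∘ₗ (e.symm : V →ₗ[ℝ] L × Lᗮ) := by
    have h1 : (A : V →ₗ[ℝ] V) ∘ₗ (e : L × Lᗮ →ₗ[ℝ] V)
        = (e : L × Lᗮ →ₗ[ℝ] V) ∘ₗ f.prodMap g := by
      apply LinearMap.ext
      rintro ⟨x, y⟩
      have hx : ((f x : L) : V) = A (x : V) := LinearMap.restrict_coe_apply _ _ _
      have hy : ((g y : Lᗮ) : V) = A (y : V) := LinearMap.restrict_coe_apply _ _ _
      show A ((x : V) + (y : V)) = ((f x : L) : V) + ((g y : Lᗮ) : V)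
      rw [hx, hy, map_add]
    calc (A : V →ₗ[ℝ] V)
        = ((A : V →ₗ[ℝ] V) ∘ₗ (e : L × Lᗮ →ₗ[ℝ] V)) ∘ₗ (e.symm : V →ₗ[ℝ] L × Lᗮ) := by
          apply LinearMap.ext; intro v; simp
      _ = (e : L × Lᗮ →ₗ[ℝ] V) ∘ₗ (f.prodMap g) ∘ₗ (e.symm : V →ₗ[ℝ] L × Lᗮ) := by
          rw [h1, LinearMap.comp_assoc]
  have bL : Basis (Fin 1) ℝ L := Module.finBasisOfFinrankEq ℝ L hL
  have bP : Basis (Fin (Module.finrank ℝ Lᗮ)) ℝ Lᗮ := Module.finBasis ℝ Lᗮ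
  have hdet2 : LinearMap.det (A : V →ₗ[ℝ] V) = LinearMap.det f * LinearMap.det g := by
    rw [hcomp, LinearMap.det_conj, aux_det_prodMap bL bP]
  -- ‖A l‖ = |det f|
  set lL : L := ⟨l, hl⟩ with hlLdef
  have hrep : ∀ x : L, x = (bL.repr x) 0 • bL 0 := by
    intro x
    have := bL.sum_repr x
    rwa [Fin.sum_univ_one, eq_comm] at this
  have hdetf : LinearMap.det f = bL.repr (f (bL 0)) 0 := by
    rw [← LinearMap.det_toMatrix bL, Matrix.det_fin_one, LinearMap.toMatrix_apply]
  have hb0 : f (bL 0) = LinearMap.det f • bL 0 := by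
    rw [hdetf]; exact hrep (f (bL 0))
  have hflL : f lL = LinearMap.det f • lL := by
    conv_lhs => rw [hrep lL]
    rw [map_smul, hb0, smul_comm, ← hrep lL]
  have hAl : ‖A l‖ = |LinearMap.det f| := by
    have h1 : (f lL : V) = A l := LinearMap.restrict_coe_apply _ _ _
    have h2 : ((LinearMap.det f • lL : L) : V) = LinearMap.det f • l := rfl
    rw [← h1, hflL, h2, norm_smul, Real.norm_eq_abs, hln, mul_one]
  -- A.symm u₁ 
  have hginj : Function.Injective g := by
    intro x y hxy
    apply Subtype.ext
    apply A.injective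
    have := congrArg (Subtype.val) hxy
    rwa [hgdef, LinearMap.restrict_coe_apply, LinearMap.restrict_coe_apply] at this
  obtain ⟨w, hwu⟩ := (LinearMap.injective_iff_surjective.mp hginj) ⟨u₁, hu₁⟩
  have hwcoe : (w : V) = A.symm u₁ := by
    have h := congrArg (Subtype.val) hwu
    rw [hgdef, LinearMap.restrict_coe_apply] at h
    apply A.injective
    rw [A.apply_symm_apply]
    exact h
  -- norms transfer
  have hgnorm : ∀ x : Lᗮ, ‖g x‖ = ‖A (x : V)‖ := by
    intro x
    rw [← Submodule.norm_coe, hgdef, LinearMap.restrict_coe_apply]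
    rfl
  have hexp' : ∀ x : Lᗮ, x ≠ 0 → ‖x‖ < ‖g x‖ := by
    intro x hx
    rw [hgnorm, ← Submodule.norm_coe]
    exact hexp x x.2 (by simpa using hx)
  have key := aux_expand hdim g hexp' w ⟨u₂, hu₂⟩
    (by rw [hwu, ← Submodule.norm_coe]; exact hu₁n)
    (by rw [← Submodule.norm_coe]; exact hu₂n)
  rw [hgnorm ⟨u₂, hu₂⟩] at key
  have hwn : ‖w‖ = ‖A.symm u₁‖ := by rw [← Submodule.norm_coe, hwcoe]
  rw [hwn] at key
  -- conclude
  have hone : |LinearMap.det f| * |LinearMap.det g| = 1 := by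
    rw [← abs_mul, ← hdet2, hdet]
  have hfpos : 0 < |LinearMap.det f| := by
    rcases (abs_nonneg (LinearMap.det f)).lt_or_eq with h | h
    · exact h
    · rw [← h] at hone; simp at hone
  calc ‖A l‖ * ‖A.symm u₁‖ * ‖A u₂‖
      = |LinearMap.det f| * (‖A.symm u₁‖ * ‖A u₂‖) := by rw [hAl]; ring
    _ < |LinearMap.det f| * |LinearMap.det g| :=
        mul_lt_mul_of_pos_left key hfpos
    _ = 1 := hone
end

section
/- Let V be a nonzero finite-dimensional complex vector space and let f : V → V be a linear endomorphism. Then the collection of f-invariant subspaces {p : Submodule ℂ V | f(p) ⊆ p} is infinite if and only if f has an eigenvalue whose eigenspace has dimension at least 2 (equivalently, f has an eigenvalue with at least two linearly independent eigenvectors). -/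
open Polynomial Module LinearMap

lemma aux_aeval_restrict {V : Type*} [AddCommGroup V] [Module ℂ V]
    (f : V →ₗ[ℂ] V) {W : Submodule ℂ V} (hW : ∀ x ∈ W, f x ∈ W)
    (p : ℂ[X]) (x : W) :
    ((Polynomial.aeval (f.restrict hW) p) x : V) = (Polynomial.aeval f p) x := by
  induction p using Polynomial.induction_on' with
  | add p q hp hq => simp [hp, hq]
  | monomial n a =>
      simp [aeval_monomial, Module.End.pow_restrict n hW, LinearMap.restrict_apply,
        Module.algebraMap_end_apply]

lemma aux_finrank_ker_aeval_le {V : Type*} [AddCommGroup V] [Module ℂ V] [FiniteDimensional ℂ V]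
    (f : V →ₗ[ℂ] V) (h1 : ∀ μ : ℂ, Module.finrank ℂ (Module.End.eigenspace f μ) ≤ 1)
    (n : ℕ) : ∀ p : ℂ[X], p ≠ 0 → p.natDegree = n →
      Module.finrank ℂ (LinearMap.ker (Polynomial.aeval f p)) ≤ n := by
  induction n with
  | zero =>
      intro p hp hd
      have hc : p.coeff 0 ≠ 0 := by
        intro h0
        apply hp
        rw [Polynomial.eq_C_of_natDegree_eq_zero hd, h0, map_zero]
      have hker : LinearMap.ker (Polynomial.aeval f p) = ⊥ := by
        rw [Polynomial.eq_C_of_natDegree_eq_zero hd]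
        ext x
        simp [Module.algebraMap_end_apply, smul_eq_zero, hc]
      rw [hker]
      simp
  | succ n ih =>
      intro p hp hd
      have hdeg : 0 < p.degree := by
        rw [Polynomial.natDegree_pos_iff_degree_pos.symm]; omega
      obtain ⟨μ, hμ⟩ := Complex.exists_root hdeg
      obtain ⟨q, hq⟩ := (Polynomial.dvd_iff_isRoot.mpr hμ)
      have hq0 : q ≠ 0 := by rintro rfl; simp at hq; exact hp hq
      have hqd : q.natDegree = n := by
        have := Polynomial.natDegree_mul (Polynomial.X_sub_C_ne_zero μ) hq0
        rw [← hq, Polynomial.natDegree_X_sub_C] at this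
        omega
      set K := LinearMap.ker (Polynomial.aeval f p) with hK
      set g : V →ₗ[ℂ] V := Polynomial.aeval f (Polynomial.X - Polynomial.C μ) with hg
      let φ : K →ₗ[ℂ] V := g.comp K.subtype
      have hrn := LinearMap.finrank_range_add_finrank_ker φ
      have hcomp : (Polynomial.aeval f q) * g = Polynomial.aeval f p := by
        rw [hg, ← map_mul, mul_comm q, ← hq]
      have hrange : LinearMap.range φ ≤ LinearMap.ker (Polynomial.aeval f q) := by
        rintro _ ⟨⟨x, hx⟩, rfl⟩
        simp only [LinearMap.mem_ker]
        have hx' : (Polynomial.aeval f p) x = 0 := hx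
        calc (Polynomial.aeval f q) (φ ⟨x, hx⟩)
            = ((Polynomial.aeval f q) * g) x := rfl
          _ = (Polynomial.aeval f p) x := by rw [hcomp]
          _ = 0 := hx'
      have h2 : Module.finrank ℂ (LinearMap.range φ) ≤ n :=
        le_trans (Submodule.finrank_mono hrange) (ih q hq0 hqd)
      have h3 : Module.finrank ℂ (LinearMap.ker φ) ≤ 1 := by
        have hmap : (LinearMap.ker φ).map K.subtype ≤ Module.End.eigenspace f μ := by
          rintro _ ⟨⟨x, hx⟩, hker, rfl⟩
          rw [Module.End.mem_eigenspace_iff]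
          have h0 : g x = 0 := hker
          rw [hg] at h0
          simp only [map_sub, Polynomial.aeval_X, Polynomial.aeval_C,
            LinearMap.sub_apply, Module.algebraMap_end_apply] at h0
          exact sub_eq_zero.mp h0
        calc Module.finrank ℂ (LinearMap.ker φ)
            = Module.finrank ℂ ((LinearMap.ker φ).map K.subtype) :=
              (Submodule.equivMapOfInjective K.subtype K.injective_subtype _).finrank_eq
          _ ≤ Module.finrank ℂ (Module.End.eigenspace f μ) := Submodule.finrank_mono hmap
          _ ≤ 1 := h1 μ
      omega

lemma aux_monic_divisors_finite (m : ℂ[X]) (hm : m ≠ 0) :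
    {q : ℂ[X] | q.Monic ∧ q ∣ m}.Finite := by
  apply Set.Finite.of_finite_image (f := Polynomial.roots)
  · apply Set.Finite.subset (Set.Finite.ofFinset m.roots.powerset.toFinset
      (fun x => Iff.rfl))
    rintro _ ⟨q, ⟨hq, hdvd⟩, rfl⟩
    exact Multiset.mem_toFinset.mpr (Multiset.mem_powerset.mpr
      (Polynomial.roots.le_of_dvd hm hdvd))
  · rintro q ⟨hq, hqd⟩ r ⟨hr, hrd⟩ hroots
    have hqs := (IsAlgClosed.splits q).eq_prod_roots_of_monic hq
    have hrs := (IsAlgClosed.splits r).eq_prod_roots_of_monic hr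
    rw [hqs, hrs, hroots]

/-- A linear endomorphism of a nonzero finite-dimensional complex vector space
admits infinitely many invariant subspaces if and only if it has an eigenvalue
whose eigenspace has dimension at least 2. -/
theorem stmt_3
    {V : Type*} [AddCommGroup V] [Module ℂ V] [FiniteDimensional ℂ V]
    [Nontrivial V] (f : V →ₗ[ℂ] V) :
    {p : Submodule ℂ V | ∀ x ∈ p, f x ∈ p}.Infinite ↔
      ∃ μ : ℂ, 2 ≤ Module.finrank ℂ (Module.End.eigenspace f μ) := by
  constructor
  · intro hinf
    by_contra hcon
    push_neg at hcon
    have h1 : ∀ μ : ℂ, Module.finrank ℂ (Module.End.eigenspace f μ) ≤ 1 := by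
      intro μ; have := hcon μ; omega
    -- every invariant subspace is the kernel of its minimal polynomial evaluated at f
    have key : ∀ (W : Submodule ℂ V) (hW : ∀ x ∈ W, f x ∈ W),
        W = LinearMap.ker (Polynomial.aeval f (minpoly ℂ (f.restrict hW))) := by
      intro W hW
      set m := minpoly ℂ (f.restrict hW) with hm
      have hint : IsIntegral ℂ (f.restrict hW) := LinearMap.isIntegral _
      have hm0 : m ≠ 0 := minpoly.ne_zero hint
      have hle : W ≤ LinearMap.ker (Polynomial.aeval f m) := by
        intro x hx
        rw [LinearMap.mem_ker]
        have := aux_aeval_restrict f hW m ⟨x, hx⟩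
        rw [← this, minpoly.aeval]
        rfl
      have hdeg : m.natDegree ≤ Module.finrank ℂ W := by
        have hdvd : m ∣ (f.restrict hW).charpoly := LinearMap.minpoly_dvd_charpoly _
        have := Polynomial.natDegree_le_of_dvd hdvd (f.restrict hW).charpoly_monic.ne_zero
        rwa [LinearMap.charpoly_natDegree] at this
      have hker : Module.finrank ℂ (LinearMap.ker (Polynomial.aeval f m)) ≤
          Module.finrank ℂ W :=
        le_trans (aux_finrank_ker_aeval_le f h1 m.natDegree m hm0 rfl) hdeg
      exact Submodule.eq_of_le_of_finrank_le hle hker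
    -- the set of invariant subspaces injects into monic divisors of minpoly f
    apply hinf
    classical
    set φ : Submodule ℂ V → ℂ[X] := fun W =>
      if h : ∀ x ∈ W, f x ∈ W then minpoly ℂ (f.restrict h) else 1 with hφ
    have hfint : IsIntegral ℂ f := LinearMap.isIntegral f
    apply Set.Finite.of_finite_image (f := φ)
    · apply Set.Finite.subset (aux_monic_divisors_finite (minpoly ℂ f) (minpoly.ne_zero hfint))
      rintro _ ⟨W, hW, rfl⟩
      simp only [Set.mem_setOf_eq] at hW
      rw [hφ]; simp only [dif_pos hW]
      constructor
      · exact minpoly.monic (LinearMap.isIntegral _)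
      · apply minpoly.dvd
        apply LinearMap.ext
        intro x
        apply Subtype.ext
        rw [LinearMap.zero_apply, aux_aeval_restrict f hW (minpoly ℂ f) x, minpoly.aeval]
        simp
    · rintro W₁ hW₁ W₂ hW₂ heq
      simp only [Set.mem_setOf_eq] at hW₁ hW₂
      rw [hφ] at heq
      simp only [dif_pos hW₁, dif_pos hW₂] at heq
      rw [key W₁ hW₁, key W₂ hW₂, heq]
  · rintro ⟨μ, hμ⟩
    obtain ⟨b, hb⟩ := exists_linearIndependent_of_le_finrank hμ
    set u : Fin 2 → V := fun i => ((b i : Module.End.eigenspace f μ) : V) with hu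
    have hli : LinearIndependent ℂ u :=
      hb.map' (Module.End.eigenspace f μ).subtype (Submodule.ker_subtype _)
    have hmem : ∀ i, u i ∈ Module.End.eigenspace f μ := fun i => (b i).2
    have heig : ∀ i, f (u i) = μ • u i := fun i =>
      Module.End.mem_eigenspace_iff.mp (hmem i)
    apply Set.infinite_of_injective_forall_mem
      (f := fun c : ℂ => Submodule.span ℂ {u 0 + c • u 1})
    · intro c c' hcc
      have hcc' : Submodule.span ℂ {u 0 + c • u 1} = Submodule.span ℂ {u 0 + c' • u 1} := hcc
      have hmem0 : u 0 + c • u 1 ∈ Submodule.span ℂ {u 0 + c' • u 1} := by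
        rw [← hcc']; exact Submodule.mem_span_singleton_self _
      obtain ⟨a, ha⟩ := Submodule.mem_span_singleton.mp hmem0
      have hsum : (a - 1) • u 0 + (a * c' - c) • u 1 = 0 := by
        have h : a • (u 0 + c' • u 1) = u 0 + c • u 1 := ha
        rw [smul_add, smul_smul] at h
        rw [sub_smul, sub_smul, one_smul, sub_add_sub_comm, h, sub_self]
      have hz := Fintype.linearIndependent_iff.mp hli ![a - 1, a * c' - c]
        (by rw [Fin.sum_univ_two]; simpa using hsum)
      have h0 : a - 1 = 0 := by simpa using hz 0
      have h1 : a * c' - c = 0 := by simpa using hz 1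
      have ha1 : a = 1 := by linear_combination h0
      linear_combination c' * ha1 - h1
    · intro c
      simp only [Set.mem_setOf_eq]
      intro x hx
      obtain ⟨a, rfl⟩ := Submodule.mem_span_singleton.mp hx
      rw [map_smul, map_add, heig 0, map_smul, heig 1]
      apply Submodule.smul_mem
      rw [Submodule.mem_span_singleton]
      exact ⟨μ, by module⟩
end

section
/- Let α be a Hausdorff topological space, let φ¹, φ² : ℝ → α → α be continuous flows on α, and let h : α → α be a continuous map conjugating their time-1 maps: h(φ¹_1(y)) = φ²_1(h(y)) for all y ∈ α. Suppose x ∈ α satisfies φ¹_T(x) = x and φ²_T(h(x)) = h(x) for some irrational number T. Then h conjugates the flows along the orbit of x: h(φ¹_t(x)) = φ²_t(h(x)) for every t ∈ ℝ. -/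
/-- If a continuous map `h` conjugates the time-1 maps of two continuous flows,
then on a common periodic orbit of irrational period `T` it conjugates the
flows themselves. -/
theorem stmt_9
    {α : Type*} [TopologicalSpace α] [T2Space α]
    (φ₁ φ₂ : ℝ → α → α)
    (hid₁ : φ₁ 0 = id) (hgroup₁ : ∀ s t : ℝ, φ₁ (s + t) = φ₁ s ∘ φ₁ t)
    (hcont₁ : Continuous fun p : ℝ × α => φ₁ p.1 p.2)
    (hid₂ : φ₂ 0 = id) (hgroup₂ : ∀ s t : ℝ, φ₂ (s + t) = φ₂ s ∘ φ₂ t)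
    (hcont₂ : Continuous fun p : ℝ × α => φ₂ p.1 p.2)
    (h : α → α) (hhcont : Continuous h)
    (hconj : ∀ y : α, h (φ₁ 1 y) = φ₂ 1 (h y))
    (x : α) (T : ℝ) (hT : Irrational T)
    (hper₁ : φ₁ T x = x) (hper₂ : φ₂ T (h x) = h x) :
    ∀ t : ℝ, h (φ₁ t x) = φ₂ t (h x) := by
  -- the set where the conjugacy holds
  set E : Set ℝ := {t | h (φ₁ t x) = φ₂ t (h x)} with hE
  -- injectivity of time-1 map of φ₂
  have hinj : Function.Injective (φ₂ 1) := by
    intro a b hab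
    have : φ₂ (-1) (φ₂ 1 a) = φ₂ (-1) (φ₂ 1 b) := by rw [hab]
    have key : ∀ c : α, φ₂ (-1) (φ₂ 1 c) = c := by
      intro c
      have := congrArg (fun f => f c) (hgroup₂ (-1) 1)
      simp only [Function.comp_apply] at this
      rw [neg_add_cancel, hid₂] at this
      exact this.symm
    rwa [key, key] at this
  -- T-periodicity of both orbits
  have hper₁' : ∀ t : ℝ, φ₁ (t + T) x = φ₁ t x := by
    intro t
    have := congrArg (fun f => f x) (hgroup₁ t T)
    simpa [hper₁] using this
  have hper₂' : ∀ t : ℝ, φ₂ (t + T) (h x) = φ₂ t (h x) := by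
    intro t
    have := congrArg (fun f => f (h x)) (hgroup₂ t T)
    simpa [hper₂] using this
  -- membership in E is invariant under t ↦ t + 1
  have step1 : ∀ t : ℝ, t ∈ E ↔ t + 1 ∈ E := by
    intro t
    have e1 : φ₁ (t + 1) x = φ₁ 1 (φ₁ t x) := by
      have := congrArg (fun f => f x) (hgroup₁ 1 t)
      rw [add_comm]
      exact this
    have e2 : φ₂ (t + 1) (h x) = φ₂ 1 (φ₂ t (h x)) := by
      have := congrArg (fun f => f (h x)) (hgroup₂ 1 t)
      rw [add_comm]
      exact this
    constructor
    · intro ht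
      show h (φ₁ (t + 1) x) = φ₂ (t + 1) (h x)
      rw [e1, e2, hconj, ht]
    · intro ht
      have : φ₂ 1 (h (φ₁ t x)) = φ₂ 1 (φ₂ t (h x)) := by
        rw [← hconj, ← e1, ← e2]; exact ht
      exact hinj this
  have stepT : ∀ t : ℝ, t ∈ E ↔ t + T ∈ E := by
    intro t
    show (h (φ₁ t x) = φ₂ t (h x)) ↔ (h (φ₁ (t + T) x) = φ₂ (t + T) (h x))
    rw [hper₁', hper₂']
  -- invariance under integer shifts
  have stepZ : ∀ (n : ℤ) (t : ℝ), t ∈ E → t + n ∈ E := by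
    intro n
    induction n using Int.induction_on with
    | zero => intro t ht; simpa using ht
    | succ k ih =>
      intro t ht
      have := (step1 (t + k)).1 (ih t ht)
      have harith : (t + k) + 1 = t + ((k : ℤ) + 1 : ℤ) := by push_cast; ring
      rwa [harith] at this
    | pred k ih =>
      intro t ht
      have h1 := ih t ht
      have := (step1 (t + (-(k : ℤ) - 1 : ℤ))).2
      apply this
      have harith : (t + (-(k : ℤ) - 1 : ℤ)) + 1 = t + (-(k : ℤ) : ℤ) := by push_cast; ring
      rwa [harith]
  have stepZT : ∀ (m : ℤ) (t : ℝ), t ∈ E → t + m * T ∈ E := by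
    intro m
    induction m using Int.induction_on with
    | zero => intro t ht; simpa using ht
    | succ k ih =>
      intro t ht
      have := (stepT (t + k * T)).1 (ih t ht)
      have harith : (t + (k : ℝ) * T) + T = t + (((k : ℤ) + 1 : ℤ) : ℝ) * T := by
        push_cast; ring
      rwa [harith] at this
    | pred k ih =>
      intro t ht
      apply (stepT (t + ((-(k : ℤ) - 1 : ℤ) : ℝ) * T)).2
      have harith : (t + ((-(k : ℤ) - 1 : ℤ) : ℝ) * T) + T = t + ((-(k : ℤ) : ℤ) : ℝ) * T := by
        push_cast; ring
      rw [harith]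
      exact ih t ht
  -- the subgroup generated by 1 and T
  set S : AddSubgroup ℝ := AddSubgroup.closure {1, T} with hS
  have hSE : (S : Set ℝ) ⊆ E := by
    have hsup : S = AddSubgroup.zmultiples (1 : ℝ) ⊔ AddSubgroup.zmultiples T := by
      rw [hS]
      rw [show ({1, T} : Set ℝ) = {1} ∪ {T} from rfl, AddSubgroup.closure_union]
      simp [AddSubgroup.zmultiples_eq_closure]
    intro s hs
    rw [hsup] at hs
    rcases AddSubgroup.mem_sup.mp hs with ⟨a, ha, b, hb, hab⟩
    rcases AddSubgroup.mem_zmultiples_iff.mp ha with ⟨n, hn⟩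
    rcases AddSubgroup.mem_zmultiples_iff.mp hb with ⟨m, hm⟩
    have h0 : (0 : ℝ) ∈ E := by
      show h (φ₁ 0 x) = φ₂ 0 (h x)
      rw [hid₁, hid₂]; rfl
    have h1 : (0 : ℝ) + m * T ∈ E := stepZT m 0 h0
    have h2 : ((0 : ℝ) + m * T) + n ∈ E := stepZ n _ h1
    have : ((0 : ℝ) + m * T) + n = s := by
      rw [← hab, ← hn, ← hm]; push_cast [zsmul_eq_mul]; ring
    rwa [this] at h2
  -- S is dense since T is irrational
  have hdense : Dense (S : Set ℝ) := by
    rcases AddSubgroup.dense_or_cyclic S with hd | ⟨a, ha⟩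
    · exact hd
    · exfalso
      have h1S : (1 : ℝ) ∈ S := AddSubgroup.subset_closure (by simp)
      have hTS : T ∈ S := AddSubgroup.subset_closure (by simp)
      rw [ha] at h1S hTS
      rcases AddSubgroup.mem_closure_singleton.mp h1S with ⟨n, hn⟩
      rcases AddSubgroup.mem_closure_singleton.mp hTS with ⟨m, hm⟩
      have hn0 : (n : ℝ) ≠ 0 := by
        intro hcon
        rw [zsmul_eq_mul, hcon, zero_mul] at hn
        exact one_ne_zero hn.symm
      have hnZ : n ≠ 0 := by
        intro hcon; apply hn0; rw [hcon]; simp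
      have haval : a = 1 / (n : ℝ) := by
        rw [zsmul_eq_mul] at hn
        field_simp
        linarith [hn]
      have : T = ((m : ℚ) / (n : ℚ) : ℚ) := by
        rw [zsmul_eq_mul, haval] at hm
        push_cast
        rw [← hm]
        ring
      exact hT ⟨_, this.symm⟩
  -- E is closed
  have hEclosed : IsClosed E := by
    have c1 : Continuous fun t : ℝ => h (φ₁ t x) :=
      hhcont.comp (hcont₁.comp (continuous_id.prodMk continuous_const))
    have c2 : Continuous fun t : ℝ => φ₂ t (h x) :=
      hcont₂.comp (continuous_id.prodMk continuous_const)
    exact isClosed_eq c1 c2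
  -- conclude
  have hdE : Dense E := hdense.mono hSE
  intro t
  have ht : t ∈ closure E := hdE t
  rwa [hEclosed.closure_eq] at ht
end
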